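/- arXiv:1401.0399 — 3 statements merged into one kernel-verified Lean document; each statement's English description precedes it below -/
import Mathlib

section
/- Let F : ℝ² → ℝ² be a polynomial map. Then F(Rk) = R F(k) for all R ∈ SO(2) and all k ∈ ℝ² if and only if there exist one-variable real polynomials u and v such that F(k) = u(s(k)) k + v(s(k)) k^⊥ for all k ∈ ℝ². -/
open Matrix

/-- The squared norm `s(k) = k_x² + k_y²`. -/
def sq2 (k : Fin 2 → ℝ) : ℝ := k 0 ^ 2 + k 1 ^ 2

/-- The perpendicular vector `k^⊥ = (k_y, −k_x)`. -/
def perp2 (k : Fin 2 → ℝ) : Fin 2 → ℝ := ![k 1, -k 0]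

/-!
SO(2) consists of the matrices `!![a, -c; c, a]` with `a² + c² = 1`. For an equivariant `F`, the
scalars `⟪F k, k⟫` and `⟪F k, k^⊥⟫` are rotation-invariant polynomials. Such a polynomial is
determined by its restriction to the `x`-axis, which is even (rotation by `π`), hence a polynomial
in `t²`; so both scalars are polynomials `qa(s)`, `qb(s)` in `s = |k|²`, vanishing at `s = 0`.
Since `s F = ⟪F, k⟫ k + ⟪F, k^⊥⟫ k^⊥`, dividing by `s` gives `u = qa / X` and `v = qb / X`
(and `F 0 = 0`, again by rotation by `π`). Conversely `s` is rotation-invariant and `⊥` commutes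
with rotations.
-/

open Polynomial

namespace Polynomial

variable {R : Type*} [CommRing R]

theorem coeff_comp_neg_X (p : R[X]) (n : ℕ) : (p.comp (-X)).coeff n = (-1) ^ n * p.coeff n := by
  rw [← neg_one_mul (X : R[X]), ← C_1, ← C_neg, comp_C_mul_X_coeff, mul_comm]

theorem expand_contract_two_of_comp_neg_X [IsDomain R] [CharZero R] {p : R[X]}
    (h : p.comp (-X) = p) : expand R 2 (contract 2 p) = p := by
  ext n
  rw [coeff_expand two_pos]
  split_ifs with hn
  · rw [coeff_contract two_ne_zero, Nat.div_mul_cancel hn]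
  · have hodd : Odd n := Nat.not_even_iff_odd.1 (even_iff_two_dvd.not.2 hn)
    have := coeff_comp_neg_X p n
    rw [h, hodd.neg_one_pow, neg_one_mul, CharZero.eq_neg_self_iff] at this
    exact this.symm

theorem exists_eval_eq_eval_sq_of_even [IsDomain R] [CharZero R] {p : R[X]}
    (hp : Function.Even fun t ↦ p.eval t) : ∃ q : R[X], ∀ t, p.eval t = q.eval (t ^ 2) := by
  have h : p.comp (-X) = p := Polynomial.funext fun t ↦ by simpa using hp t
  exact ⟨contract 2 p, fun t ↦ by rw [← expand_eval, expand_contract_two_of_comp_neg_X h]⟩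

theorem eval_eq_mul_eval_divX {p : R[X]} (hp : p.eval 0 = 0) (x : R) :
    p.eval x = x * p.divX.eval x := by
  conv_lhs => rw [← X_mul_divX_add p, coeff_zero_eq_eval_zero, hp]
  simp

end Polynomial

theorem MvPolynomial.exists_eval_eq_eval_smul {σ R : Type*} [CommRing R] (Q : MvPolynomial σ R)
    (v : σ → R) : ∃ p : R[X], ∀ t, p.eval t = MvPolynomial.eval (t • v) Q := by
  refine ⟨MvPolynomial.aeval (fun i ↦ Polynomial.C (v i) * Polynomial.X) Q, fun t ↦ ?_⟩
  rw [← Polynomial.coe_aeval_eq_eval, comp_aeval_apply]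
  have hv : (fun i ↦ Polynomial.aeval t (Polynomial.C (v i) * Polynomial.X)) = t • v := by
    funext i
    simp only [Polynomial.coe_aeval_eq_eval, Polynomial.eval_mul, Polynomial.eval_C,
      Polynomial.eval_X, Pi.smul_apply, smul_eq_mul]
    ring
  rw [hv]
  rfl

theorem Matrix.forall_specialOrthogonal_fin_two_iff {R : Type*} [CommRing R]
    {P : Matrix (Fin 2) (Fin 2) R → Prop} :
    (∀ M : Matrix (Fin 2) (Fin 2) R, Mᵀ * M = 1 → M.det = 1 → P M) ↔
      ∀ a c : R, a ^ 2 + c ^ 2 = 1 → P !![a, -c; c, a] := by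
  have hSO (M : Matrix (Fin 2) (Fin 2) R) :
      Mᵀ * M = 1 ∧ M.det = 1 ↔ M ∈ specialOrthogonalGroup (Fin 2) R :=
    (and_congr_left' (mem_orthogonalGroup_iff' (A := M)).symm).trans
      mem_specialOrthogonalGroup_iff.symm
  constructor
  · intro h a c hac
    have hM := (hSO !![a, -c; c, a]).2 <|
      of_mem_specialOrthogonalGroup_fin_two_iff.2 ⟨rfl, rfl, by rwa [neg_sq]⟩
    exact h _ hM.1 hM.2
  · intro h M hMM hdet
    obtain ⟨hd, hb, hab⟩ := mem_specialOrthogonalGroup_fin_two_iff.1 ((hSO M).1 ⟨hMM, hdet⟩)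
    have hM : M = !![M 0 0, -M 1 0; M 1 0, M 0 0] := by
      ext i j; fin_cases i <;> fin_cases j <;> simp [hb, hd]
    rw [hM]
    exact h _ _ (by rwa [hb, neg_sq] at hab)

theorem sq2_eq_dotProduct_self (k : Fin 2 → ℝ) : sq2 k = k ⬝ᵥ k := by
  simp [sq2, dotProduct, Fin.sum_univ_two, sq]

theorem sq2_nonneg (k : Fin 2 → ℝ) : 0 ≤ sq2 k := by
  unfold sq2; positivity

theorem sq2_eq_zero_iff {k : Fin 2 → ℝ} : sq2 k = 0 ↔ k = 0 := by
  rw [sq2_eq_dotProduct_self, dotProduct_self_eq_zero]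

theorem sq2_mul_apply (w k : Fin 2 → ℝ) :
    ∀ i, sq2 k * w i = (w ⬝ᵥ k) * k i + (w ⬝ᵥ perp2 k) * perp2 k i := by
  simp only [Fin.forall_fin_two, sq2, perp2, dotProduct, Fin.sum_univ_two, cons_val_zero,
    cons_val_one, cons_val_fin_one]
  constructor <;> ring

section rotation

variable (a c : ℝ) (k w : Fin 2 → ℝ)

theorem rot_mulVec : !![a, -c; c, a] *ᵥ k = ![a * k 0 - c * k 1, c * k 0 + a * k 1] := by
  ext i; fin_cases i <;> simp [vecHead, vecTail, sub_eq_add_neg]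

theorem rot_mulVec_dotProduct_rot_mulVec :
    (!![a, -c; c, a] *ᵥ w) ⬝ᵥ (!![a, -c; c, a] *ᵥ k) = (a ^ 2 + c ^ 2) * (w ⬝ᵥ k) := by
  rw [rot_mulVec, rot_mulVec]
  simp only [dotProduct, Fin.sum_univ_two, cons_val_zero, cons_val_one, cons_val_fin_one]
  ring

theorem sq2_rot_mulVec : sq2 (!![a, -c; c, a] *ᵥ k) = (a ^ 2 + c ^ 2) * sq2 k := by
  rw [sq2_eq_dotProduct_self, sq2_eq_dotProduct_self, rot_mulVec_dotProduct_rot_mulVec]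

theorem perp2_rot_mulVec : perp2 (!![a, -c; c, a] *ᵥ k) = !![a, -c; c, a] *ᵥ perp2 k := by
  rw [rot_mulVec, rot_mulVec]
  ext i; fin_cases i <;> simp [perp2, sub_eq_add_neg, add_comm]

theorem neg_one_rot_mulVec : !![-1, -0; 0, -1] *ᵥ k = -k := by
  rw [rot_mulVec]; ext i; fin_cases i <;> simp

theorem exists_rot_mulVec_eq :
    ∃ a c : ℝ, a ^ 2 + c ^ 2 = 1 ∧ !![a, -c; c, a] *ᵥ ![√(sq2 k), 0] = k := by
  rcases eq_or_ne k 0 with rfl | hk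
  · exact ⟨1, 0, by norm_num, by simp [sq2]⟩
  have hs : 0 < sq2 k := (sq2_nonneg k).lt_of_ne' (sq2_eq_zero_iff.not.2 hk)
  have hr : √(sq2 k) ≠ 0 := (Real.sqrt_pos.2 hs).ne'
  refine ⟨k 0 / √(sq2 k), k 1 / √(sq2 k), ?_, ?_⟩
  · rw [div_pow, div_pow, ← add_div, Real.sq_sqrt hs.le]
    exact div_self hs.ne'
  · rw [rot_mulVec]; ext i; fin_cases i <;> simp [hr]

end rotation

theorem exists_eq_eval_sq2_of_rot_invariant {g : (Fin 2 → ℝ) → ℝ}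
    (hg : ∃ Q : MvPolynomial (Fin 2) ℝ, ∀ k, g k = MvPolynomial.eval k Q)
    (hinv : ∀ a c : ℝ, a ^ 2 + c ^ 2 = 1 → ∀ k, g (!![a, -c; c, a] *ᵥ k) = g k) :
    ∃ q : ℝ[X], ∀ k, g k = q.eval (sq2 k) := by
  obtain ⟨Q, hQ⟩ := hg
  obtain ⟨p, hp⟩ := Q.exists_eval_eq_eval_smul ![1, 0]
  have hp_axis (t : ℝ) : p.eval t = g ![t, 0] := by simp [hp, hQ]
  have hp_even : Function.Even fun t ↦ p.eval t := fun t ↦ by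
    change p.eval (-t) = p.eval t
    rw [hp_axis, hp_axis, ← hinv (-1) 0 (by norm_num), neg_one_rot_mulVec]
    simp
  obtain ⟨q, hq⟩ := exists_eval_eq_eval_sq_of_even hp_even
  refine ⟨q, fun k ↦ ?_⟩
  obtain ⟨a, c, hac, hk⟩ := exists_rot_mulVec_eq k
  calc g k = g ![√(sq2 k), 0] := (congrArg g hk).symm.trans (hinv a c hac _)
    _ = q.eval (sq2 k) := by rw [← hp_axis, hq, Real.sq_sqrt (sq2_nonneg k)]

def radialField (u v : ℝ[X]) (k : Fin 2 → ℝ) : Fin 2 → ℝ :=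
  u.eval (sq2 k) • k + v.eval (sq2 k) • perp2 k

theorem radialField_apply (u v : ℝ[X]) (k : Fin 2 → ℝ) (i : Fin 2) :
    radialField u v k i = u.eval (sq2 k) * k i + v.eval (sq2 k) * perp2 k i :=
  rfl

theorem radialField_rot_mulVec (u v : ℝ[X]) {a c : ℝ} (hac : a ^ 2 + c ^ 2 = 1)
    (k : Fin 2 → ℝ) :
    radialField u v (!![a, -c; c, a] *ᵥ k) = !![a, -c; c, a] *ᵥ radialField u v k := by
  rw [radialField, radialField, sq2_rot_mulVec, hac, one_mul, perp2_rot_mulVec, mulVec_add,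
    mulVec_smul, mulVec_smul]

theorem exists_eq_radialField_of_rot_equivariant {F : (Fin 2 → ℝ) → Fin 2 → ℝ}
    {P : Fin 2 → MvPolynomial (Fin 2) ℝ} (hP : ∀ k i, F k i = MvPolynomial.eval k (P i))
    (hF : ∀ a c : ℝ, a ^ 2 + c ^ 2 = 1 → ∀ k, F (!![a, -c; c, a] *ᵥ k) = !![a, -c; c, a] *ᵥ F k) :
    ∃ u v : ℝ[X], F = radialField u v := by
  have hF0 : F 0 = 0 := by
    have h := hF (-1) 0 (by norm_num) 0
    rwa [mulVec_zero, neg_one_rot_mulVec, eq_comm, neg_eq_self] at h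
  obtain ⟨qa, hqa⟩ := exists_eq_eval_sq2_of_rot_invariant (g := fun k ↦ F k ⬝ᵥ k)
    ⟨∑ i, P i * MvPolynomial.X i, fun k ↦ by simp [dotProduct, hP]⟩
    fun a c hac k ↦ by simp only [hF a c hac, rot_mulVec_dotProduct_rot_mulVec, hac, one_mul]
  obtain ⟨qb, hqb⟩ := exists_eq_eval_sq2_of_rot_invariant (g := fun k ↦ F k ⬝ᵥ perp2 k)
    ⟨P 0 * MvPolynomial.X 1 - P 1 * MvPolynomial.X 0, fun k ↦ by
      simp only [dotProduct, hP, perp2, Fin.sum_univ_two, cons_val_zero, cons_val_one,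
        cons_val_fin_one, map_sub, map_mul, MvPolynomial.eval_X]
      ring⟩
    fun a c hac k ↦ by
      simp only [hF a c hac, perp2_rot_mulVec, rot_mulVec_dotProduct_rot_mulVec, hac, one_mul]
  have hqa0 : qa.eval 0 = 0 := by simpa [sq2] using (hqa 0).symm
  have hqb0 : qb.eval 0 = 0 := by simpa [sq2, perp2, hF0] using (hqb 0).symm
  refine ⟨qa.divX, qb.divX, funext fun k ↦ funext fun i ↦ ?_⟩
  rcases eq_or_ne k 0 with rfl | hk
  · fin_cases i <;> simp [hF0, radialField, perp2]
  apply mul_left_cancel₀ (sq2_eq_zero_iff.not.2 hk)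
  calc sq2 k * F k i = (F k ⬝ᵥ k) * k i + (F k ⬝ᵥ perp2 k) * perp2 k i := sq2_mul_apply _ _ _
    _ = qa.eval (sq2 k) * k i + qb.eval (sq2 k) * perp2 k i := by rw [hqa, hqb]
    _ = sq2 k * radialField qa.divX qb.divX k i := by
      rw [radialField_apply, eval_eq_mul_eval_divX hqa0, eval_eq_mul_eval_divX hqb0]; ring

/-- a polynomial vector field `F : ℝ² → ℝ²` is equivariant under all
rotations iff `F(k) = u(s(k)) k + v(s(k)) k^⊥` for one-variable polynomials `u, v`. -/
theorem rotation_equivariant_vector_field_2d (F : (Fin 2 → ℝ) → (Fin 2 → ℝ))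
    (hF : ∃ P : Fin 2 → MvPolynomial (Fin 2) ℝ,
      ∀ (k : Fin 2 → ℝ) (i : Fin 2), F k i = MvPolynomial.eval k (P i)) :
    (∀ R : Matrix (Fin 2) (Fin 2) ℝ, Rᵀ * R = 1 → R.det = 1 →
      ∀ k : Fin 2 → ℝ, F (R.mulVec k) = R.mulVec (F k))
    ↔ ∃ u v : Polynomial ℝ, ∀ (k : Fin 2 → ℝ) (i : Fin 2),
        F k i = Polynomial.eval (sq2 k) u * k i + Polynomial.eval (sq2 k) v * perp2 k i := by
  obtain ⟨P, hP⟩ := hF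
  have h_radial (u v : ℝ[X]) :
      (∀ k i, F k i = u.eval (sq2 k) * k i + v.eval (sq2 k) * perp2 k i) ↔
        F = radialField u v := by
    simp only [funext_iff, radialField_apply]
  simp only [h_radial]
  rw [forall_specialOrthogonal_fin_two_iff (P := fun R ↦ ∀ k, F (R *ᵥ k) = R *ᵥ F k)]
  constructor
  · exact exists_eq_radialField_of_rot_equivariant hP
  · rintro ⟨u, v, rfl⟩ a c hac k
    exact radialField_rot_mulVec u v hac k
end

section
/- Let Q : ℝ³ → M₃(ℝ) be a polynomial map (each matrix entry a real polynomial in k_x, k_y, k_z). Then Q(Rk) = R Q(k) Rᵀ for all R ∈ SO(3) and all k ∈ ℝ³ if and only if there exist one-variable real polynomials m, z, f such that Q(k) = m(s(k)) I₃ + z(s(k)) k kᵀ + f(s(k)) [k]_× for all k ∈ ℝ³. -/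
open Matrix

/-- The squared norm `s(k) = k_x² + k_y² + k_z²`. -/
def sq3 (k : Fin 3 → ℝ) : ℝ := k 0 ^ 2 + k 1 ^ 2 + k 2 ^ 2

/-- The antisymmetric matrix `[k]_×` of the cross product: `[k]_× w = k × w`. -/
def crossMat (k : Fin 3 → ℝ) : Matrix (Fin 3) (Fin 3) ℝ :=
  !![0, -k 2, k 1; k 2, 0, -k 0; -k 1, k 0, 0]

/-!
Every rotation needed is a half-turn `2 w wᵀ / |w|² - 1`. The half-turn about `e₀` fixes `t e₀`,
while those about `e₂` and `e₁ + e₂` both send it to `-t e₀`; comparing them gives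
`Q(t e₀) = diag(a, b, b) + c [e₀]_×` with `a, b` even and `c` odd polynomials in `t`. The half-turn
about `e₀ + e₁` fixes `0` and gives `a(0) = b(0)`. Hence `b(t) = m(t²)`, `a(t) - b(t) = t² z(t²)`
and `c(t) = t f(t²)`, so `Q` agrees on the axis with the normal form
`m(s) I₃ + z(s) k kᵀ + f(s) [k]_×`. The normal form is equivariant, and every `k` is the image of
some `t e₀` under a rotation (the half-turn about `t e₀ + k` for `t = ±|k|`), so the two agree
everywhere.
-/

open Polynomial

namespace Polynomial

variable {K : Type*} [Field K] [CharZero K]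

theorem exists_eval_sq_of_eval_neg (p : K[X]) (h : ∀ t, p.eval (-t) = p.eval t) :
    ∃ q : K[X], ∀ t, p.eval t = q.eval (t ^ 2) := by
  have hcomp : p.comp (C (-1) * X) = p := Polynomial.funext fun t => by simp [h]
  have hodd : ∀ n, ¬ 2 ∣ n → p.coeff n = 0 := fun n hn => by
    have := congrArg (coeff · n) hcomp
    have hn' : Odd n := Nat.odd_iff.mpr (Nat.two_dvd_ne_zero.mp hn)
    simp only [comp_C_mul_X_coeff, hn'.neg_one_pow] at this
    linear_combination (-1 / 2 : K) * this
  have hexpand : expand K 2 (contract 2 p) = p := by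
    ext n
    rw [coeff_expand two_pos, coeff_contract two_ne_zero]
    split_ifs with hn
    · rw [Nat.div_mul_cancel hn]
    · exact (hodd n hn).symm
  exact ⟨contract 2 p, fun t => by rw [← expand_eval, hexpand]⟩

theorem exists_eval_eq_mul_eval_sq_of_eval_neg (p : K[X]) (h : ∀ t, p.eval (-t) = -p.eval t) :
    ∃ q : K[X], ∀ t, p.eval t = t * q.eval (t ^ 2) := by
  have h0 : p.coeff 0 = 0 := by
    rw [coeff_zero_eq_eval_zero]
    linear_combination (1 / 2 : K) * (by simpa using h 0 : p.eval 0 = -p.eval 0)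
  obtain ⟨e, rfl⟩ := X_dvd_iff.mpr h0
  have he : ∀ t, e.eval (-t) = e.eval t := fun t => by
    rcases eq_or_ne t 0 with rfl | ht
    · rw [neg_zero]
    · exact mul_left_cancel₀ (neg_ne_zero.mpr ht) (by simpa using h t)
  obtain ⟨q, hq⟩ := exists_eval_sq_of_eval_neg e he
  exact ⟨q, fun t => by simp [hq]⟩

end Polynomial

section HalfTurn

variable {n K : Type*} [Fintype n] [DecidableEq n] [Field K]

def halfTurn (w : n → K) : Matrix n n K := (2 / (w ⬝ᵥ w)) • vecMulVec w w - 1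

variable {w : n → K}

theorem halfTurn_mulVec (v : n → K) :
    halfTurn w *ᵥ v = (2 * (w ⬝ᵥ v) / (w ⬝ᵥ w)) • w - v := by
  ext i
  simp only [halfTurn, sub_mulVec, smul_mulVec, vecMulVec_mulVec, op_smul_eq_smul, one_mulVec,
    Pi.sub_apply, Pi.smul_apply, smul_eq_mul, sub_left_inj]
  ring

theorem transpose_halfTurn : (halfTurn w)ᵀ = halfTurn w := by
  simp [halfTurn, transpose_vecMulVec]

theorem halfTurn_mul_self (hw : w ⬝ᵥ w ≠ 0) : halfTurn w * halfTurn w = 1 := by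
  have hsq : vecMulVec w w * vecMulVec w w = (w ⬝ᵥ w) • vecMulVec w w := by
    ext i j
    simp only [Matrix.mul_apply, vecMulVec_apply, Matrix.smul_apply, smul_eq_mul, dotProduct,
      Finset.sum_mul]
    exact Finset.sum_congr rfl fun k _ => by ring
  simp only [halfTurn, sub_mul, mul_sub, smul_mul_smul_comm, hsq, smul_smul, mul_one, one_mul]
  rw [show 2 / (w ⬝ᵥ w) * (2 / (w ⬝ᵥ w)) * (w ⬝ᵥ w) = 2 * (2 / (w ⬝ᵥ w)) by field_simp]
  module

theorem det_halfTurn (hw : w ⬝ᵥ w ≠ 0) : (halfTurn w).det = (-1) ^ (Fintype.card n + 1) := by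
  have h : halfTurn w = -(1 + replicateCol Unit (-(2 / (w ⬝ᵥ w)) • w) * replicateRow Unit w) := by
    rw [← vecMulVec_eq, halfTurn, smul_vecMulVec]
    simp only [neg_smul, neg_add, neg_neg]
    abel
  rw [h, det_neg, det_one_add_replicateCol_mul_replicateRow, dotProduct_smul, smul_eq_mul,
    dotProduct_comm]
  field_simp
  ring

theorem halfTurn_add_mulVec {u v : n → K} (huv : u ⬝ᵥ u = v ⬝ᵥ v)
    (hw : (u + v) ⬝ᵥ (u + v) ≠ 0) : halfTurn (u + v) *ᵥ u = v := by
  have hsum : (u + v) ⬝ᵥ (u + v) = 2 * ((u + v) ⬝ᵥ u) := by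
    simp only [add_dotProduct, dotProduct_add, dotProduct_comm v u, huv]
    ring
  rw [halfTurn_mulVec, hsum, div_self (hsum ▸ hw), one_smul, add_sub_cancel_left]

end HalfTurn

theorem sq3_eq_dotProduct (k : Fin 3 → ℝ) : sq3 k = k ⬝ᵥ k := by
  simp [sq3, dotProduct, Fin.sum_univ_three, sq]

theorem exists_rotation_mulVec_axis (k : Fin 3 → ℝ) :
    ∃ t : ℝ, ∃ R : Matrix (Fin 3) (Fin 3) ℝ, Rᵀ * R = 1 ∧ R.det = 1 ∧ R *ᵥ ![t, 0, 0] = k := by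
  obtain ⟨r, hr⟩ : ∃ r : ℝ, r ^ 2 = k ⬝ᵥ k :=
    ⟨√(sq3 k), by rw [Real.sq_sqrt (by unfold sq3; positivity), sq3_eq_dotProduct]⟩
  set u : Fin 3 → ℝ := ![r, 0, 0]
  have huk : u ⬝ᵥ u = k ⬝ᵥ k := by
    rw [← hr]
    simp [u, dotProduct, Fin.sum_univ_three, sq]
  by_cases hw : (u + k) ⬝ᵥ (u + k) = 0
  · refine ⟨-r, 1, by simp, det_one, ?_⟩
    rw [one_mulVec, eq_neg_of_add_eq_zero_right (dotProduct_self_eq_zero.mp hw)]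
    simp [u]
  · refine ⟨r, halfTurn (u + k), ?_, ?_, halfTurn_add_mulVec huk hw⟩
    · rw [transpose_halfTurn, halfTurn_mul_self hw]
    · rw [det_halfTurn hw]
      norm_num

theorem sq3_mulVec {R : Matrix (Fin 3) (Fin 3) ℝ} (hR : Rᵀ * R = 1) (k : Fin 3 → ℝ) :
    sq3 (R *ᵥ k) = sq3 k := by
  rw [sq3_eq_dotProduct, sq3_eq_dotProduct, dotProduct_mulVec, ← mulVec_transpose, mulVec_mulVec,
    hR, one_mulVec]

/-- `(R u) ⋅ ((R v) × (R w)) = det R · u ⋅ (v × w)`, written as a matrix identity. -/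
theorem transpose_mul_crossMat_mulVec_mul (R : Matrix (Fin 3) (Fin 3) ℝ) (v : Fin 3 → ℝ) :
    Rᵀ * crossMat (R *ᵥ v) * R = R.det • crossMat v := by
  ext i j
  fin_cases i <;> fin_cases j <;>
    simp [crossMat, det_fin_three, Matrix.mul_apply, mulVec, dotProduct, Fin.sum_univ_three] <;>
    ring

theorem crossMat_mulVec {R : Matrix (Fin 3) (Fin 3) ℝ} (hR : Rᵀ * R = 1) (hdet : R.det = 1)
    (v : Fin 3 → ℝ) : crossMat (R *ᵥ v) = R * crossMat v * Rᵀ := by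
  have hR' : R * Rᵀ = 1 := mul_eq_one_comm.mp hR
  calc crossMat (R *ᵥ v) = (R * Rᵀ) * crossMat (R *ᵥ v) * (R * Rᵀ) := by
        rw [hR', Matrix.one_mul, Matrix.mul_one]
    _ = R * (Rᵀ * crossMat (R *ᵥ v) * R) * Rᵀ := by simp only [Matrix.mul_assoc]
    _ = R * crossMat v * Rᵀ := by rw [transpose_mul_crossMat_mulVec_mul, hdet, one_smul]

theorem mul_vecMulVec_mul_transpose {m n α : Type*} [CommSemiring α] [Fintype n]
    (R : Matrix m n α) (u v : n → α) : R * vecMulVec u v * Rᵀ = vecMulVec (R *ᵥ u) (R *ᵥ v) := by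
  rw [mul_vecMulVec, vecMulVec_mul, vecMul_transpose]

def IsRotationEquivariant (Q : (Fin 3 → ℝ) → Matrix (Fin 3) (Fin 3) ℝ) : Prop :=
  ∀ R : Matrix (Fin 3) (Fin 3) ℝ, Rᵀ * R = 1 → R.det = 1 → ∀ k, Q (R *ᵥ k) = R * Q k * Rᵀ

def normalForm (m z f : ℝ[X]) (k : Fin 3 → ℝ) : Matrix (Fin 3) (Fin 3) ℝ :=
  m.eval (sq3 k) • 1 + z.eval (sq3 k) • vecMulVec k k + f.eval (sq3 k) • crossMat k

theorem normalForm_apply (m z f : ℝ[X]) (k : Fin 3 → ℝ) (i j : Fin 3) :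
    normalForm m z f k i j = m.eval (sq3 k) * (1 : Matrix (Fin 3) (Fin 3) ℝ) i j
      + z.eval (sq3 k) * (k i * k j) + f.eval (sq3 k) * crossMat k i j := by
  simp [normalForm, vecMulVec_apply]

theorem isRotationEquivariant_normalForm (m z f : ℝ[X]) :
    IsRotationEquivariant (normalForm m z f) := by
  intro R hR hdet k
  have hR' : R * Rᵀ = 1 := mul_eq_one_comm.mp hR
  simp only [normalForm, sq3_mulVec hR, ← mul_vecMulVec_mul_transpose, crossMat_mulVec hR hdet,
    Matrix.mul_add, Matrix.add_mul, Matrix.mul_smul, Matrix.smul_mul, Matrix.mul_one, hR']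

namespace IsRotationEquivariant

variable {Q : (Fin 3 → ℝ) → Matrix (Fin 3) (Fin 3) ℝ}

theorem eq_conj_of_halfTurn_eq (hQ : IsRotationEquivariant Q) {w : Fin 3 → ℝ} (hw : w ⬝ᵥ w ≠ 0)
    {H : Matrix (Fin 3) (Fin 3) ℝ} (hH : halfTurn w = H) {k k' : Fin 3 → ℝ} (hk : H *ᵥ k = k') :
    Q k' = H * Q k * H := by
  subst hH hk
  have h := hQ (halfTurn w) (by rw [transpose_halfTurn, halfTurn_mul_self hw])
    (by rw [det_halfTurn hw]; norm_num) k
  rwa [transpose_halfTurn] at h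

theorem apply_neg_axis (hQ : IsRotationEquivariant Q) (t : ℝ) :
    Q ![-t, 0, 0] =
      !![-1, 0, 0; 0, -1, 0; 0, 0, 1] * Q ![t, 0, 0] * !![-1, 0, 0; 0, -1, 0; 0, 0, 1] :=
  hQ.eq_conj_of_halfTurn_eq (w := ![0, 0, 1]) (by simp)
    (by ext i j; fin_cases i <;> fin_cases j <;>
        norm_num [halfTurn, one_apply, dotProduct, Fin.sum_univ_three, cons_val_two])
    (by ext i; fin_cases i <;> simp [mulVec, dotProduct, Fin.sum_univ_three])

theorem apply_axis (hQ : IsRotationEquivariant Q) (t : ℝ) :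
    Q ![t, 0, 0] = !![Q ![t, 0, 0] 0 0, 0, 0;
      0, Q ![t, 0, 0] 1 1, -Q ![t, 0, 0] 2 1;
      0, Q ![t, 0, 0] 2 1, Q ![t, 0, 0] 1 1] := by
  have h₀ : Q ![t, 0, 0] =
      !![1, 0, 0; 0, -1, 0; 0, 0, -1] * Q ![t, 0, 0] * !![1, 0, 0; 0, -1, 0; 0, 0, -1] :=
    hQ.eq_conj_of_halfTurn_eq (w := ![1, 0, 0]) (by simp)
      (by ext i j; fin_cases i <;> fin_cases j <;>
        norm_num [halfTurn, one_apply, dotProduct, Fin.sum_univ_three, cons_val_two])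
      (by ext i; fin_cases i <;> simp [mulVec, dotProduct, Fin.sum_univ_three])
  have h₁ : Q ![-t, 0, 0] =
      !![-1, 0, 0; 0, 0, 1; 0, 1, 0] * Q ![t, 0, 0] * !![-1, 0, 0; 0, 0, 1; 0, 1, 0] :=
    hQ.eq_conj_of_halfTurn_eq (w := ![0, 1, 1]) (by simp [dotProduct, Fin.sum_univ_three])
      (by ext i j; fin_cases i <;> fin_cases j <;>
        norm_num [halfTurn, one_apply, dotProduct, Fin.sum_univ_three, cons_val_two])
      (by ext i; fin_cases i <;> simp [mulVec, dotProduct, Fin.sum_univ_three])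
  rw [hQ.apply_neg_axis] at h₁
  ext i j
  have e₀ := congrFun (congrFun h₀ i) j
  have e₁ := congrFun (congrFun h₁ i) j
  fin_cases i <;> fin_cases j <;>
    simp [Matrix.mul_apply, Fin.sum_univ_three, vecMul, dotProduct] at e₀ e₁ ⊢ <;> linarith

theorem apply_zero_diag (hQ : IsRotationEquivariant Q) : Q ![0, 0, 0] 0 0 = Q ![0, 0, 0] 1 1 := by
  have h : Q ![0, 0, 0] =
      !![0, 1, 0; 1, 0, 0; 0, 0, -1] * Q ![0, 0, 0] * !![0, 1, 0; 1, 0, 0; 0, 0, -1] :=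
    hQ.eq_conj_of_halfTurn_eq (w := ![1, 1, 0]) (by simp [dotProduct, Fin.sum_univ_three])
      (by ext i j; fin_cases i <;> fin_cases j <;>
        norm_num [halfTurn, one_apply, dotProduct, Fin.sum_univ_three, cons_val_two])
      (by ext i; fin_cases i <;> simp)
  simpa [Matrix.mul_apply, Fin.sum_univ_three, vecMul, dotProduct] using congrFun (congrFun h 0) 0

theorem exists_normalForm_axis (hQ : IsRotationEquivariant Q)
    (hpoly : ∀ i j, ∃ p : ℝ[X], ∀ t, Q ![t, 0, 0] i j = p.eval t) :
    ∃ m z f : ℝ[X], ∀ t, Q ![t, 0, 0] = normalForm m z f ![t, 0, 0] := by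
  obtain ⟨a, ha⟩ := hpoly 0 0
  obtain ⟨b, hb⟩ := hpoly 1 1
  obtain ⟨c, hc⟩ := hpoly 2 1
  have hparity : ∀ t,
      a.eval (-t) = a.eval t ∧ b.eval (-t) = b.eval t ∧ c.eval (-t) = -c.eval t := by
    intro t
    have h := hQ.apply_neg_axis t
    have e₀ := congrFun (congrFun h 0) 0
    have e₁ := congrFun (congrFun h 1) 1
    have e₂ := congrFun (congrFun h 2) 1
    simpa [Matrix.mul_apply, Fin.sum_univ_three, vecMul, dotProduct, ha, hb, hc] using
      (⟨e₀, e₁, e₂⟩ : _ ∧ _ ∧ _)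
  obtain ⟨m, hm⟩ := exists_eval_sq_of_eval_neg b fun t => (hparity t).2.1
  obtain ⟨g, hg⟩ := exists_eval_sq_of_eval_neg (a - b) fun t => by
    simp [(hparity t).1, (hparity t).2.1]
  obtain ⟨z, rfl⟩ : X ∣ g := by
    rw [X_dvd_iff, coeff_zero_eq_eval_zero]
    simpa [← ha, ← hb, hQ.apply_zero_diag] using (hg 0).symm
  obtain ⟨f, hf⟩ := exists_eval_eq_mul_eval_sq_of_eval_neg c fun t => (hparity t).2.2
  refine ⟨m, z, f, fun t => ?_⟩
  have ha' : a.eval t = m.eval (t ^ 2) + t ^ 2 * z.eval (t ^ 2) := by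
    have := hg t
    rw [eval_sub, hm, eval_mul, eval_X] at this
    linarith
  rw [hQ.apply_axis t]
  ext i j
  fin_cases i <;> fin_cases j <;>
    simp [normalForm_apply, sq3, crossMat, ha, hb, hc, ha', hm, hf] <;> ring

end IsRotationEquivariant

theorem exists_polynomial_eval_axis {Q : (Fin 3 → ℝ) → Matrix (Fin 3) (Fin 3) ℝ}
    (hQ : ∃ P : Matrix (Fin 3) (Fin 3) (MvPolynomial (Fin 3) ℝ),
      ∀ (k : Fin 3 → ℝ) (i j : Fin 3), Q k i j = MvPolynomial.eval k (P i j)) (i j : Fin 3) :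
    ∃ p : ℝ[X], ∀ t, Q ![t, 0, 0] i j = p.eval t := by
  obtain ⟨P, hP⟩ := hQ
  refine ⟨MvPolynomial.eval₂ C ![X, 0, 0] (P i j), fun t => ?_⟩
  rw [hP, MvPolynomial.polynomial_eval_eval₂, MvPolynomial.eval, MvPolynomial.coe_eval₂Hom]
  congr 1
  · ext; simp
  · ext l; fin_cases l <;> simp

theorem isRotationEquivariant_iff_exists_eq_normalForm
    {Q : (Fin 3 → ℝ) → Matrix (Fin 3) (Fin 3) ℝ}
    (hpoly : ∀ i j, ∃ p : ℝ[X], ∀ t, Q ![t, 0, 0] i j = p.eval t) :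
    IsRotationEquivariant Q ↔ ∃ m z f : ℝ[X], Q = normalForm m z f := by
  refine ⟨fun hQ => ?_, ?_⟩
  · obtain ⟨m, z, f, haxis⟩ := hQ.exists_normalForm_axis hpoly
    refine ⟨m, z, f, funext fun k => ?_⟩
    obtain ⟨t, R, hR, hdet, rfl⟩ := exists_rotation_mulVec_axis k
    rw [hQ R hR hdet, haxis, isRotationEquivariant_normalForm m z f R hR hdet]
  · rintro ⟨m, z, f, rfl⟩
    exact isRotationEquivariant_normalForm m z f

/-- a polynomial matrix field `Q : ℝ³ → M₃(ℝ)` satisfies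
`Q(Rk) = R Q(k) Rᵀ` for all rotations `R` iff
`Q(k) = m(s) I₃ + z(s) k kᵀ + f(s) [k]_×` with `s = s(k)`. -/
theorem rotation_equivariant_matrix_field_3d (Q : (Fin 3 → ℝ) → Matrix (Fin 3) (Fin 3) ℝ)
    (hQ : ∃ P : Matrix (Fin 3) (Fin 3) (MvPolynomial (Fin 3) ℝ),
      ∀ (k : Fin 3 → ℝ) (i j : Fin 3), Q k i j = MvPolynomial.eval k (P i j)) :
    (∀ R : Matrix (Fin 3) (Fin 3) ℝ, Rᵀ * R = 1 → R.det = 1 →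
      ∀ k : Fin 3 → ℝ, Q (R.mulVec k) = R * Q k * Rᵀ)
    ↔ ∃ m z f : Polynomial ℝ, ∀ (k : Fin 3 → ℝ) (i j : Fin 3),
        Q k i j = Polynomial.eval (sq3 k) m * (1 : Matrix (Fin 3) (Fin 3) ℝ) i j
          + Polynomial.eval (sq3 k) z * (k i * k j)
          + Polynomial.eval (sq3 k) f * crossMat k i j := by
  simp_rw [← normalForm_apply]
  refine (isRotationEquivariant_iff_exists_eq_normalForm (exists_polynomial_eval_axis hQ)).trans ?_
  simp only [funext_iff, ← Matrix.ext_iff]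
end

section
/- If the sequences (α_ℓ)_{ℓ≥1} and (β_m)_{m≥0} with β₀ = E satisfy the consistency identities X(t) = 𝔸(t) + 𝔅(t)·𝔹(t) and 𝔹(t)·X(t) = ℂ(t) + 𝔻(t)·𝔹(t), then α₁ = A₁ + B₁·E and β₁ = S⁻¹·( C₁ + D₁·E − E·α₁ ). -/
/-- `seriesPow a j p` is the coefficient of `t^p` in `F(t)^j`,
where `F(t) = Σ_{ℓ≥0} t^ℓ a_ℓ` (in the application `a 0 = 0`, so that
`F(t) = Σ_{ℓ≥1} t^ℓ a_ℓ`). -/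
def seriesPow {A : Type*} [Ring A] (a : ℕ → A) : ℕ → ℕ → A
  | 0, p => if p = 0 then 1 else 0
  | j + 1, p => ∑ ij ∈ Finset.HasAntidiagonal.antidiagonal p, a ij.1 * seriesPow a j ij.2

/-- `Xcoef α p` is the coefficient of `t^p` in `X(t) = Σ_{j≥0} (1/j!) F(t)^j`,
where `F(t) = Σ_{ℓ≥1} t^ℓ α_ℓ` (encoded by `α 0 = 0`, so that the coefficient of
`t^p` in `F(t)^j` vanishes for `j > p`). -/
def Xcoef {n : Type*} [Fintype n] [DecidableEq n] {R : Type*} [CommRing R] [Algebra ℚ R]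
    (α : ℕ → Matrix n n R) (p : ℕ) : Matrix n n R :=
  ∑ j ∈ Finset.range (p + 1), ((j.factorial : ℚ)⁻¹) • seriesPow α j p

section Coefficients

variable {n : Type*} [Fintype n] [DecidableEq n] {R : Type*} [CommRing R] [Algebra ℚ R]

lemma Xcoef_zero (α : ℕ → Matrix n n R) : Xcoef α 0 = 1 := by
  simp [Xcoef, seriesPow]

lemma Xcoef_one (α : ℕ → Matrix n n R) : Xcoef α 1 = α 1 := by
  simp [Xcoef, seriesPow, Finset.sum_range_succ, Finset.Nat.antidiagonal_succ]

end Coefficients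

lemma Finset.Nat.sum_antidiagonal_one_mul {M₁ M₂ M : Type*} [AddCommMonoid M] [HMul M₁ M₂ M]
    (f : ℕ → M₁) (g : ℕ → M₂) :
    ∑ ij ∈ Finset.HasAntidiagonal.antidiagonal 1, f ij.1 * g ij.2 = f 0 * g 1 + f 1 * g 0 := by
  simp [Finset.Nat.sum_antidiagonal_succ]

lemma Matrix.IsDiag.isUnit {n R : Type*} [Fintype n] [DecidableEq n] [CommRing R]
    {S : Matrix n n R} (hS : S.IsDiag) (hunit : ∀ i, IsUnit (S i i)) : IsUnit S := by
  rw [← hS.diagonal_diag, Matrix.isUnit_diagonal]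
  exact Pi.isUnit_iff.2 hunit

theorem taylor_expansion_first_order_general (N q : ℕ)
    (R : Type*) [CommRing R] [Algebra ℚ R]
    (A : ℕ → Matrix (Fin N) (Fin N) R) (B : ℕ → Matrix (Fin N) (Fin (q - N)) R)
    (C : ℕ → Matrix (Fin (q - N)) (Fin N) R) (D : ℕ → Matrix (Fin (q - N)) (Fin (q - N)) R)
    (E : Matrix (Fin (q - N)) (Fin N) R) (S : Matrix (Fin (q - N)) (Fin (q - N)) R)
    (hSdiag : S.IsDiag) (hSunit : ∀ i, IsUnit (S i i))
    (hB0 : B 0 = 0) (hD0 : D 0 = 1 - S)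
    (α : ℕ → Matrix (Fin N) (Fin N) R) (β : ℕ → Matrix (Fin (q - N)) (Fin N) R)
    (hβ0 : β 0 = E)
    (hid1 : ∀ p : ℕ, Xcoef α p = A p + ∑ ij ∈ Finset.HasAntidiagonal.antidiagonal p, B ij.1 * β ij.2)
    (hid2 : ∀ p : ℕ, ∑ ij ∈ Finset.HasAntidiagonal.antidiagonal p, β ij.1 * Xcoef α ij.2
        = C p + ∑ ij ∈ Finset.HasAntidiagonal.antidiagonal p, D ij.1 * β ij.2) :
    α 1 = A 1 + B 1 * E ∧ β 1 = S⁻¹ * (C 1 + D 1 * E - E * α 1) := by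
  have hα1 : α 1 = A 1 + B 1 * E := by
    simpa [Xcoef_one, Finset.Nat.sum_antidiagonal_one_mul, hB0, hβ0] using hid1 1
  -- Order one of the second identity reads `E α₁ + β₁ = C₁ + (1 - S) β₁ + D₁ E`.
  have hSβ1 : S * β 1 = C 1 + D 1 * E - E * α 1 := by
    have h := hid2 1
    rw [Finset.Nat.sum_antidiagonal_one_mul, Finset.Nat.sum_antidiagonal_one_mul, Xcoef_zero,
      Xcoef_one, hβ0, hD0, Matrix.sub_mul, Matrix.one_mul, Matrix.mul_one] at h
    rw [← sub_eq_zero] at h ⊢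
    rw [← h]
    abel
  have hdet : IsUnit S.det := (Matrix.isUnit_iff_isUnit_det S).1 (hSdiag.isUnit hSunit)
  refine ⟨hα1, ?_⟩
  rw [← hSβ1]
  exact (Matrix.nonsing_inv_mul_cancel_left S (β 1) hdet).symm

/-- if `(α_ℓ)_{ℓ≥1}`, `(β_m)_{m≥0}` with `β₀ = E` satisfy
`X(t) = 𝔸(t) + 𝔅(t)𝔹(t)` and `𝔹(t)X(t) = ℂ(t) + 𝔻(t)𝔹(t)`, then
`α₁ = A₁ + B₁E` and `β₁ = S⁻¹(C₁ + D₁E − Eα₁)`. -/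
theorem taylor_expansion_first_order (N q : ℕ) (hN : 1 ≤ N) (hq : N < q)
    (R : Type*) [CommRing R] [Algebra ℚ R]
    (A : ℕ → Matrix (Fin N) (Fin N) R) (B : ℕ → Matrix (Fin N) (Fin (q - N)) R)
    (C : ℕ → Matrix (Fin (q - N)) (Fin N) R) (D : ℕ → Matrix (Fin (q - N)) (Fin (q - N)) R)
    (E : Matrix (Fin (q - N)) (Fin N) R) (S : Matrix (Fin (q - N)) (Fin (q - N)) R)
    (hSdiag : S.IsDiag) (hSunit : ∀ i, IsUnit (S i i))
    (hA0 : A 0 = 1) (hB0 : B 0 = 0) (hC0 : C 0 = S * E) (hD0 : D 0 = 1 - S)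
    (α : ℕ → Matrix (Fin N) (Fin N) R) (β : ℕ → Matrix (Fin (q - N)) (Fin N) R)
    (hα0 : α 0 = 0) (hβ0 : β 0 = E)
    (hid1 : ∀ p : ℕ, Xcoef α p = A p + ∑ ij ∈ Finset.HasAntidiagonal.antidiagonal p, B ij.1 * β ij.2)
    (hid2 : ∀ p : ℕ, ∑ ij ∈ Finset.HasAntidiagonal.antidiagonal p, β ij.1 * Xcoef α ij.2
        = C p + ∑ ij ∈ Finset.HasAntidiagonal.antidiagonal p, D ij.1 * β ij.2) :
    α 1 = A 1 + B 1 * E ∧ β 1 = S⁻¹ * (C 1 + D 1 * E - E * α 1) :=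
  taylor_expansion_first_order_general N q R A B C D E S hSdiag hSunit hB0 hD0 α β hβ0 hid1 hid2
end
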